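/- arXiv:1909.05826 — 2 statements merged into one kernel-verified Lean document; each statement's English description precedes it below -/
import Mathlib

section
/- The max-relative entropy is additive under tensor products: for positive semidefinite operators ρ₁, σ₁ on A₁ and ρ₂, σ₂ on A₂, D_max(ρ₁⊗ρ₂ ‖ σ₁⊗σ₂) = D_max(ρ₁‖σ₁) + D_max(ρ₂‖σ₂). -/
open Matrix BigOperators
open scoped ComplexOrder Classical
noncomputable section
namespace QIT
variable {n m : Type*}

def Dmax [Fintype n] (ρ σ : Matrix n n ℂ) : EReal :=
  sInf ((fun l : ℝ => (l : EReal)) '' {l : ℝ | ((2:ℝ) ^ l • σ - ρ).PosSemidef})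

def matLog [Fintype n] [DecidableEq n] (A : Matrix n n ℂ) : Matrix n n ℂ :=
  if h : A.IsHermitian then
    (h.eigenvectorUnitary : Matrix n n ℂ) *
      Matrix.diagonal (fun i => (Real.log (h.eigenvalues i) : ℂ)) *
      (star (h.eigenvectorUnitary : Matrix n n ℂ))
  else 0

def mpow [Fintype n] [DecidableEq n] (A : Matrix n n ℂ) (p : ℝ) : Matrix n n ℂ :=
  if h : A.IsHermitian then
    (h.eigenvectorUnitary : Matrix n n ℂ) *
      Matrix.diagonal (fun i => ((h.eigenvalues i ^ p : ℝ) : ℂ)) *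
      (star (h.eigenvectorUnitary : Matrix n n ℂ))
  else 0

def msqrt [Fintype n] [DecidableEq n] (A : Matrix n n ℂ) : Matrix n n ℂ :=
  if h : A.PosSemidef then
    (h.1.eigenvectorUnitary : Matrix n n ℂ) *
      Matrix.diagonal ((↑) ∘ (Real.sqrt ·) ∘ h.1.eigenvalues) *
      (star h.1.eigenvectorUnitary : Matrix n n ℂ)
  else 0

def SuppLE [Fintype n] (ρ σ : Matrix n n ℂ) : Prop :=
  ∀ v, σ.mulVec v = 0 → ρ.mulVec v = 0

def relEntR [Fintype n] [DecidableEq n] (ρ σ : Matrix n n ℂ) : ℝ :=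
  ((ρ * (matLog ρ - matLog σ)).trace).re

def relEnt [Fintype n] [DecidableEq n] (ρ σ : Matrix n n ℂ) : EReal :=
  if SuppLE ρ σ then ((relEntR ρ σ : ℝ) : EReal) else ⊤

def IsDensity [Fintype n] (ρ : Matrix n n ℂ) : Prop := ρ.PosSemidef ∧ ρ.trace = 1

def matTensorMap {k : Type*} (Φ : Matrix n n ℂ → Matrix m m ℂ)
    (M : Matrix (k × n) (k × n) ℂ) : Matrix (k × m) (k × m) ℂ :=
  fun p q => Φ (fun a b => M (p.1, a) (q.1, b)) p.2 q.2

def matTensorMapLeft {k : Type*} (Φ : Matrix n n ℂ → Matrix m m ℂ)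
    (M : Matrix (n × k) (n × k) ℂ) : Matrix (m × k) (m × k) ℂ :=
  fun p q => Φ (fun a b => M (a, p.2) (b, q.2)) p.1 q.1

def IsCP [Fintype n] [Fintype m] (Φ : Matrix n n ℂ →ₗ[ℂ] Matrix m m ℂ) : Prop :=
  ∀ (k : ℕ) (M : Matrix (Fin k × n) (Fin k × n) ℂ), M.PosSemidef →
    (matTensorMap (⇑Φ) M).PosSemidef

def IsTP [Fintype n] [Fintype m] (Φ : Matrix n n ℂ →ₗ[ℂ] Matrix m m ℂ) : Prop :=
  ∀ M, (Φ M).trace = M.trace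

def DmaxChan [Fintype n] [Fintype m] (E F : Matrix n n ℂ →ₗ[ℂ] Matrix m m ℂ) : EReal :=
  ⨆ φ : {φ : Matrix (n × n) (n × n) ℂ // IsDensity φ},
    Dmax (matTensorMap (⇑E) φ.1) (matTensorMap (⇑F) φ.1)

def DChan [Fintype n] [DecidableEq n] [Fintype m] [DecidableEq m]
    (E F : Matrix n n ℂ →ₗ[ℂ] Matrix m m ℂ) : EReal :=
  ⨆ φ : {φ : Matrix (n × n) (n × n) ℂ // IsDensity φ},
    relEnt (matTensorMap (⇑E) φ.1) (matTensorMap (⇑F) φ.1)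

def DAmort [Fintype n] [DecidableEq n] [Fintype m] [DecidableEq m]
    (E F : Matrix n n ℂ →ₗ[ℂ] Matrix m m ℂ) : EReal :=
  ⨆ r : ℕ, ⨆ φ : {φ : Matrix (Fin r × n) (Fin r × n) ℂ // IsDensity φ},
    ⨆ ω : {ω : Matrix (Fin r × n) (Fin r × n) ℂ // IsDensity ω},
      relEnt (matTensorMap (⇑E) φ.1) (matTensorMap (⇑F) ω.1) - relEnt φ.1 ω.1

def traceNorm [Fintype n] [DecidableEq n] (A : Matrix n n ℂ) : ℝ :=
  ((msqrt (Aᴴ * A)).trace).re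

def genFid [Fintype n] [DecidableEq n] (ρ σ : Matrix n n ℂ) : ℝ :=
  (traceNorm (msqrt ρ * msqrt σ) +
    Real.sqrt ((1 - ρ.trace.re) * (1 - σ.trace.re))) ^ 2

def pdist [Fintype n] [DecidableEq n] (ρ σ : Matrix n n ℂ) : ℝ :=
  Real.sqrt (1 - genFid ρ σ)

def tensorPow [Fintype n] (ρ : Matrix n n ℂ) (k : ℕ) :
    Matrix (Fin k → n) (Fin k → n) ℂ :=
  fun v w => ∏ i, ρ (v i) (w i)

def chanPow [Fintype n] [DecidableEq n] [Fintype m]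
    (E : Matrix n n ℂ →ₗ[ℂ] Matrix m m ℂ) (k : ℕ)
    (M : Matrix (Fin k → n) (Fin k → n) ℂ) : Matrix (Fin k → m) (Fin k → m) ℂ :=
  fun v w => ∑ x : Fin k → n, ∑ y : Fin k → n,
    (∏ i, E (Matrix.single (x i) (y i) 1) (v i) (w i)) * M x y

open scoped Kronecker
open scoped MatrixOrder

/-!
Write `D_max(ρ‖σ)` as the infimum of the exponents `l` with `ρ ≤ 2^l σ`. Since the Kronecker
product is monotone on positive semidefinite matrices, admissible exponents of the two factors
add up to an admissible exponent of the product, which gives `≤`. Conversely, let `l` be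
admissible for the product and `l₂` not admissible for `(ρ₂, σ₂)`, witnessed by a vector `w` with
`⟨w, ρ₂ w⟩ > 2^l₂ ⟨w, σ₂ w⟩`; testing the product inequality on the vectors `u ⊗ w` shows that
`l - l₂` is admissible for `(ρ₁, σ₁)`, which gives `≥`. When some `ρᵢ = 0` both sides are `⊥`;
this case is split off because `⊥ + ⊤ = ⊥` in `EReal`.
-/

section Loewner

variable {𝕜 : Type*} [RCLike 𝕜]

theorem kronecker_le_kronecker [Finite m] [Finite n] {A B : Matrix m m 𝕜} {C D : Matrix n n 𝕜}
    (hA : 0 ≤ A) (hD : 0 ≤ D) (hAB : A ≤ B) (hCD : C ≤ D) : A ⊗ₖ C ≤ B ⊗ₖ D := by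
  have hsplit : B ⊗ₖ D - A ⊗ₖ C = (B - A) ⊗ₖ D + A ⊗ₖ (D - C) := by
    ext i j
    simp only [Matrix.sub_apply, Matrix.add_apply, kroneckerMap_apply]
    ring
  rw [le_iff, hsplit]
  exact ((le_iff.1 hAB).kronecker hD.posSemidef).add (hA.posSemidef.kronecker (le_iff.1 hCD))

theorem _root_.Matrix.IsHermitian.kronecker {A : Matrix m m 𝕜} {B : Matrix n n 𝕜}
    (hA : A.IsHermitian) (hB : B.IsHermitian) : (A ⊗ₖ B).IsHermitian := by
  rw [IsHermitian, conjTranspose_kronecker, hA.eq, hB.eq]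

theorem dotProduct_kronecker_mulVec {R l p : Type*} [CommSemiring R] [Fintype l] [Fintype m]
    [Fintype n] [Fintype p] (A : Matrix l m R) (B : Matrix n p R) (x₁ : l → R) (x₂ : n → R)
    (y₁ : m → R) (y₂ : p → R) :
    (fun i : l × n => x₁ i.1 * x₂ i.2) ⬝ᵥ (A ⊗ₖ B) *ᵥ (fun j : m × p => y₁ j.1 * y₂ j.2) =
      (x₁ ⬝ᵥ A *ᵥ y₁) * (x₂ ⬝ᵥ B *ᵥ y₂) := by
  simp only [dotProduct, mulVec, kroneckerMap_apply, Fintype.sum_prod_type]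
  rw [Finset.sum_mul_sum]
  refine Finset.sum_congr rfl fun a _ => Finset.sum_congr rfl fun b _ => ?_
  rw [mul_mul_mul_comm, Finset.sum_mul_sum, Finset.mul_sum]
  simp only [Finset.mul_sum]
  exact Finset.sum_congr rfl fun c _ => Finset.sum_congr rfl fun d _ => by ring

variable [Fintype n]

def quadForm (A : Matrix n n 𝕜) (v : n → 𝕜) : ℝ := RCLike.re (star v ⬝ᵥ A *ᵥ v)

theorem le_smul_iff_quadForm_le {A B : Matrix n n 𝕜} (hA : A.IsHermitian) (hB : B.IsHermitian)
    (c : ℝ) : A ≤ c • B ↔ ∀ v, quadForm A v ≤ c * quadForm B v := by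
  have hherm : (c • B - A).IsHermitian := (hB.smul (IsSelfAdjoint.all c)).sub hA
  rw [le_iff, posSemidef_iff_dotProduct_mulVec, and_iff_right hherm]
  refine forall_congr' fun v => ?_
  rw [RCLike.nonneg_iff, and_iff_left (hherm.im_star_dotProduct_mulVec_self v)]
  simp only [quadForm, sub_mulVec, smul_mulVec, dotProduct_sub, dotProduct_smul, map_sub,
    RCLike.smul_re, sub_nonneg]

theorem quadForm_nonneg {A : Matrix n n 𝕜} (hA : A.PosSemidef) (v : n → 𝕜) : 0 ≤ quadForm A v :=
  hA.re_dotProduct_nonneg v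

theorem quadForm_kronecker [Fintype m] {A : Matrix m m 𝕜} {B : Matrix n n 𝕜} (hA : A.IsHermitian)
    (hB : B.IsHermitian) (u : m → 𝕜) (w : n → 𝕜) :
    quadForm (A ⊗ₖ B) (fun p => u p.1 * w p.2) = quadForm A u * quadForm B w := by
  have hstar : star (fun p : m × n => u p.1 * w p.2) = fun p => star u p.1 * star w p.2 :=
    funext fun _ => star_mul' _ _
  simp only [quadForm, hstar, dotProduct_kronecker_mulVec, RCLike.mul_re,
    hA.im_star_dotProduct_mulVec_self, hB.im_star_dotProduct_mulVec_self, mul_zero, sub_zero]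

theorem exists_quadForm_pos {A : Matrix n n 𝕜} (hA : A.PosSemidef) (hA0 : A ≠ 0) :
    ∃ v, 0 < quadForm A v := by
  classical
  by_contra! h
  refine hA0 (hA.trace_eq_zero_iff.1 (Finset.sum_eq_zero fun i _ => ?_))
  have hre : RCLike.re (A i i) ≤ 0 := by simpa [quadForm] using h (Pi.single i 1)
  obtain ⟨hre', him⟩ := RCLike.nonneg_iff.1 (hA.diag_nonneg (i := i))
  exact RCLike.ext (by simpa using le_antisymm hre hre') (by simpa using him)

theorem le_smul_of_kronecker_le_smul [Fintype m] {ρ₁ σ₁ : Matrix m m 𝕜} {ρ₂ σ₂ : Matrix n n 𝕜}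
    (hρ₁ : ρ₁.IsHermitian) (hσ₁ : σ₁.PosSemidef) (hρ₂ : ρ₂.IsHermitian) (hσ₂ : σ₂.PosSemidef)
    {c d : ℝ} (hc : 0 ≤ c) (hd : 0 < d) (h : ρ₁ ⊗ₖ ρ₂ ≤ c • (σ₁ ⊗ₖ σ₂))
    (h₂ : ¬ ρ₂ ≤ d • σ₂) : ρ₁ ≤ (c / d) • σ₁ := by
  obtain ⟨w, hw⟩ : ∃ w, d * quadForm σ₂ w < quadForm ρ₂ w := by
    simpa [le_smul_iff_quadForm_le hρ₂ hσ₂.1] using h₂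
  have hρ₂w : 0 < quadForm ρ₂ w := (mul_nonneg hd.le (quadForm_nonneg hσ₂ w)).trans_lt hw
  refine (le_smul_iff_quadForm_le hρ₁ hσ₁.1 _).2 fun u => le_of_mul_le_mul_right ?_ hρ₂w
  have huw := (le_smul_iff_quadForm_le (hρ₁.kronecker hρ₂) (hσ₁.1.kronecker hσ₂.1) c).1 h
    (fun p => u p.1 * w p.2)
  rw [quadForm_kronecker hρ₁ hρ₂, quadForm_kronecker hσ₁.1 hσ₂.1] at huw
  have hcdu : 0 ≤ c / d * quadForm σ₁ u := by have := quadForm_nonneg hσ₁ u; positivity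
  calc quadForm ρ₁ u * quadForm ρ₂ w ≤ c * (quadForm σ₁ u * quadForm σ₂ w) := huw
    _ = c / d * quadForm σ₁ u * (d * quadForm σ₂ w) := by field_simp
    _ ≤ c / d * quadForm σ₁ u * quadForm ρ₂ w := by gcongr

end Loewner

section ERealInf

variable {S S₁ S₂ : Set ℝ}

theorem sInf_coe_image_le_add (h₁ : sInf (Real.toEReal '' S₁) ≠ ⊥)
    (h₂ : sInf (Real.toEReal '' S₂) ≠ ⊥) (hadd : ∀ l₁ ∈ S₁, ∀ l₂ ∈ S₂, l₁ + l₂ ∈ S) :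
    sInf (Real.toEReal '' S) ≤ sInf (Real.toEReal '' S₁) + sInf (Real.toEReal '' S₂) := by
  refine EReal.le_add_of_forall_gt (.inl h₁) (.inr h₂) fun a ha b hb => ?_
  obtain ⟨_, ⟨l₁, hl₁, rfl⟩, hla⟩ := sInf_lt_iff.1 ha
  obtain ⟨_, ⟨l₂, hl₂, rfl⟩, hlb⟩ := sInf_lt_iff.1 hb
  calc sInf (Real.toEReal '' S) ≤ ↑(l₁ + l₂) := sInf_le ⟨_, hadd l₁ hl₁ l₂ hl₂, rfl⟩
    _ ≤ a + b := by rw [EReal.coe_add]; exact add_le_add hla.le hlb.le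

theorem add_le_sInf_coe_image (hsub : ∀ l ∈ S, ∀ l₂ ∉ S₂, l - l₂ ∈ S₁) :
    sInf (Real.toEReal '' S₁) + sInf (Real.toEReal '' S₂) ≤ sInf (Real.toEReal '' S) := by
  refine le_sInf ?_
  rintro _ ⟨l, hl, rfl⟩
  refine EReal.add_le_of_forall_lt fun a ha b hb => ?_
  induction b using EReal.rec with
  | bot => simp
  | top => exact absurd hb not_top_lt
  | coe b =>
    have hb' : b ∉ S₂ := fun h => hb.not_ge (sInf_le ⟨b, h, rfl⟩)
    have hab : a ≤ ↑(l - b) := (ha.trans_le (sInf_le ⟨_, hsub l hl b hb', rfl⟩)).le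
    calc a + b ≤ ↑(l - b) + b := add_le_add hab le_rfl
      _ = l := by rw [← EReal.coe_add, sub_add_cancel]

end ERealInf

section Dmax

variable [Fintype m] [Fintype n]

theorem Dmax_zero_left {σ : Matrix n n ℂ} (hσ : σ.PosSemidef) : Dmax 0 σ = ⊥ := by
  have hS : {l : ℝ | ((2:ℝ) ^ l • σ - 0).PosSemidef} = Set.univ :=
    Set.eq_univ_of_forall fun l => by simpa using hσ.smul (by positivity : (0:ℝ) ≤ 2 ^ l)
  rw [Dmax, hS, Set.image_univ, EReal.eq_bot_iff_forall_lt]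
  exact fun y => (sInf_le (Set.mem_range_self (y - 1))).trans_lt
    (EReal.coe_lt_coe_iff.2 (sub_one_lt y))

theorem Dmax_ne_bot {ρ σ : Matrix n n ℂ} (hρ : ρ.PosSemidef) (hρ0 : ρ ≠ 0)
    (hσ : σ.PosSemidef) : Dmax ρ σ ≠ ⊥ := by
  obtain ⟨v, hv⟩ := exists_quadForm_pos hρ hρ0
  refine ne_bot_of_le_ne_bot (EReal.coe_ne_bot (Real.logb 2 (quadForm ρ v / quadForm σ v)))
    (le_sInf ?_)
  rintro _ ⟨l, hl, rfl⟩
  have hvl : quadForm ρ v ≤ 2 ^ l * quadForm σ v := (le_smul_iff_quadForm_le hρ.1 hσ.1 _).1 hl v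
  have hσv : 0 < quadForm σ v := pos_of_mul_pos_right (hv.trans_le hvl) (by positivity)
  rw [EReal.coe_le_coe_iff, Real.logb_le_iff_le_rpow one_lt_two (div_pos hv hσv),
    div_le_iff₀ hσv]
  exact hvl

theorem Dmax_kronecker_le {ρ₁ σ₁ : Matrix m m ℂ} {ρ₂ σ₂ : Matrix n n ℂ}
    (hρ₁ : ρ₁.PosSemidef) (hρ₁0 : ρ₁ ≠ 0) (hσ₁ : σ₁.PosSemidef)
    (hρ₂ : ρ₂.PosSemidef) (hρ₂0 : ρ₂ ≠ 0) (hσ₂ : σ₂.PosSemidef) :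
    Dmax (ρ₁ ⊗ₖ ρ₂) (σ₁ ⊗ₖ σ₂) ≤ Dmax ρ₁ σ₁ + Dmax ρ₂ σ₂ := by
  refine sInf_coe_image_le_add (Dmax_ne_bot hρ₁ hρ₁0 hσ₁) (Dmax_ne_bot hρ₂ hρ₂0 hσ₂)
    fun l₁ h₁ l₂ h₂ => ?_
  have hsmul : (2:ℝ) ^ (l₁ + l₂) • (σ₁ ⊗ₖ σ₂) = ((2:ℝ) ^ l₁ • σ₁) ⊗ₖ ((2:ℝ) ^ l₂ • σ₂) := by
    rw [smul_kronecker, kronecker_smul, smul_smul, Real.rpow_add two_pos]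
  change ρ₁ ⊗ₖ ρ₂ ≤ _
  rw [hsmul]
  exact kronecker_le_kronecker hρ₁.nonneg (hσ₂.smul (by positivity)).nonneg h₁ h₂

theorem add_le_Dmax_kronecker {ρ₁ σ₁ : Matrix m m ℂ} {ρ₂ σ₂ : Matrix n n ℂ}
    (hρ₁ : ρ₁.IsHermitian) (hσ₁ : σ₁.PosSemidef) (hρ₂ : ρ₂.IsHermitian) (hσ₂ : σ₂.PosSemidef) :
    Dmax ρ₁ σ₁ + Dmax ρ₂ σ₂ ≤ Dmax (ρ₁ ⊗ₖ ρ₂) (σ₁ ⊗ₖ σ₂) :=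
  add_le_sInf_coe_image fun l hl l₂ hl₂ => by
    have := le_smul_of_kronecker_le_smul hρ₁ hσ₁ hρ₂ hσ₂ (by positivity) (by positivity) hl hl₂
    rwa [← Real.rpow_sub two_pos] at this

end Dmax

/-- **Additivity of the max-relative entropy under tensor (Kronecker) products.**
For positive semidefinite `ρ₁, σ₁` on `A₁` and `ρ₂, σ₂` on `A₂`,
`D_max(ρ₁ ⊗ ρ₂ ‖ σ₁ ⊗ σ₂) = D_max(ρ₁‖σ₁) + D_max(ρ₂‖σ₂)`. -/
theorem Dmax_additive_tensor {n₁ n₂ : Type*} [Fintype n₁] [Fintype n₂]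
    (ρ₁ σ₁ : Matrix n₁ n₁ ℂ) (ρ₂ σ₂ : Matrix n₂ n₂ ℂ)
    (hρ₁ : ρ₁.PosSemidef) (hσ₁ : σ₁.PosSemidef)
    (hρ₂ : ρ₂.PosSemidef) (hσ₂ : σ₂.PosSemidef) :
    Dmax (ρ₁ ⊗ₖ ρ₂) (σ₁ ⊗ₖ σ₂) = Dmax ρ₁ σ₁ + Dmax ρ₂ σ₂ := by
  rcases eq_or_ne ρ₁ 0 with rfl | hρ₁0
  · rw [zero_kronecker, Dmax_zero_left (hσ₁.kronecker hσ₂), Dmax_zero_left hσ₁, EReal.bot_add]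
  rcases eq_or_ne ρ₂ 0 with rfl | hρ₂0
  · rw [kronecker_zero, Dmax_zero_left (hσ₁.kronecker hσ₂), Dmax_zero_left hσ₂, EReal.add_bot]
  exact le_antisymm (Dmax_kronecker_le hρ₁ hρ₁0 hσ₁ hρ₂ hρ₂0 hσ₂)
    (add_le_Dmax_kronecker hρ₁.1 hσ₁ hρ₂.1 hσ₂)

end QIT
end
end

section
/- For the stabilized channel max-relative entropy, the optimization over input states reduces to the Choi operators: D_max(E‖F) = D_max(J^E ‖ J^F), where J^E, J^F are the (unnormalized) Choi operators of E and F. -/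
open Matrix BigOperators
open scoped ComplexOrder Classical
noncomputable section
namespace QIT
variable {n m : Type*}

/-- The unnormalized maximally entangled operator `|Ω⟩⟨Ω|` with `|Ω⟩ = Σᵢ |i⟩|i⟩`. -/
def omegaProj (n : Type*) [DecidableEq n] : Matrix (n × n) (n × n) ℂ :=
  fun p q => if p.1 = p.2 ∧ q.1 = q.2 then 1 else 0

/-- The (unnormalized) Choi operator `J^Φ = (id ⊗ Φ)(|Ω⟩⟨Ω|)`. -/
def choi {n m : Type*} [DecidableEq n] (Φ : Matrix n n ℂ → Matrix m m ℂ) :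
    Matrix (n × m) (n × m) ℂ :=
  matTensorMap Φ (omegaProj n)

/-! The Choi operator of `2 ^ λ • F - E` is `2 ^ λ • J^F - J^E`, and a positive semidefinite Choi
operator makes `id ⊗ Φ` positive on every positive input: writing the input as a sum of rank-one
terms `v v†`, each term is mapped to `A J^Φ A†`, where `A = V ⊗ 1` and `V` is `v` reshaped into
a matrix. Hence every input state gives at most `D_max(J^E ‖ J^F)`, and the normalized maximally
entangled state `Ω / |n|` attains it, as `D_max` is invariant under rescaling both arguments by
the same positive factor. -/

open scoped Kronecker

lemma matTensorMap_apply_eq_sum_choi {k : Type*} [Fintype n] [DecidableEq n]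
    (Φ : Matrix n n ℂ →ₗ[ℂ] Matrix m m ℂ) (M : Matrix (k × n) (k × n) ℂ) (a c : k) (b d : m) :
    matTensorMap (⇑Φ) M (a, b) (c, d) = ∑ x, ∑ y, M (a, x) (c, y) * choi (⇑Φ) (x, b) (y, d) := by
  change Φ (fun x y => M (a, x) (c, y)) b d = _
  rw [Matrix.matrix_eq_sum_single (fun x y => M (a, x) (c, y) : Matrix n n ℂ)]
  simp only [map_sum, Matrix.sum_apply]
  refine Finset.sum_congr rfl fun x _ => Finset.sum_congr rfl fun y _ => ?_
  rw [show single x y (M (a, x) (c, y)) = M (a, x) (c, y) • single x y 1 by simp, map_smul]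
  rfl

lemma matTensorMap_sum {k ι : Type*} [Fintype n] [DecidableEq n]
    (Φ : Matrix n n ℂ →ₗ[ℂ] Matrix m m ℂ) (s : Finset ι) (M : ι → Matrix (k × n) (k × n) ℂ) :
    matTensorMap (⇑Φ) (∑ i ∈ s, M i) = ∑ i ∈ s, matTensorMap (⇑Φ) (M i) := by
  ext ⟨a, b⟩ ⟨c, d⟩
  simp only [matTensorMap_apply_eq_sum_choi, Matrix.sum_apply, Finset.sum_mul]
  exact (Finset.sum_congr rfl fun x _ => Finset.sum_comm).trans Finset.sum_comm

lemma matTensorMap_smul {k : Type*} [Fintype n] [DecidableEq n]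
    (Φ : Matrix n n ℂ →ₗ[ℂ] Matrix m m ℂ) (r : ℝ) (M : Matrix (k × n) (k × n) ℂ) :
    matTensorMap (⇑Φ) (r • M) = r • matTensorMap (⇑Φ) M := by
  ext ⟨a, b⟩ ⟨c, d⟩
  simp [matTensorMap_apply_eq_sum_choi, Finset.mul_sum, mul_assoc]

lemma matTensorMap_smul_sub {k : Type*} (E F : Matrix n n ℂ →ₗ[ℂ] Matrix m m ℂ) (r : ℝ)
    (M : Matrix (k × n) (k × n) ℂ) :
    matTensorMap (⇑(r • F - E)) M = r • matTensorMap (⇑F) M - matTensorMap (⇑E) M :=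
  rfl

lemma matTensorMap_vecMulVec {k : Type*} [Fintype n] [DecidableEq n] [Fintype m]
    [DecidableEq m] (Φ : Matrix n n ℂ →ₗ[ℂ] Matrix m m ℂ) (v : k × n → ℂ) :
    matTensorMap (⇑Φ) (vecMulVec v (star v)) =
      (of (fun a x => v (a, x)) ⊗ₖ (1 : Matrix m m ℂ)) * choi (⇑Φ) *
        (of (fun a x => v (a, x)) ⊗ₖ (1 : Matrix m m ℂ))ᴴ := by
  ext ⟨a, b⟩ ⟨c, d⟩
  simp only [matTensorMap_apply_eq_sum_choi, vecMulVec_apply, Pi.star_apply, RCLike.star_def,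
    mul_apply, kroneckerMap_apply, of_apply, one_apply, mul_ite, mul_one, mul_zero, ite_mul,
    zero_mul, Fintype.sum_prod_type, Finset.sum_ite_eq, Finset.mem_univ, ↓reduceIte,
    conjTranspose_apply, apply_ite (starRingEnd ℂ), map_zero, Finset.sum_mul]
  rw [Finset.sum_comm]
  exact Finset.sum_congr rfl fun x _ => Finset.sum_congr rfl fun y _ => by ring

lemma matTensorMap_posSemidef_of_choi {k : Type*} [Fintype k] [Fintype n] [DecidableEq n]
    [Fintype m] (Φ : Matrix n n ℂ →ₗ[ℂ] Matrix m m ℂ) (hΦ : (choi (⇑Φ)).PosSemidef)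
    {M : Matrix (k × n) (k × n) ℂ} (hM : M.PosSemidef) : (matTensorMap (⇑Φ) M).PosSemidef := by
  obtain ⟨r, v, rfl⟩ := Matrix.posSemidef_iff_eq_sum_vecMulVec.mp hM
  rw [matTensorMap_sum]
  exact posSemidef_sum _ fun i _ =>
    matTensorMap_vecMulVec Φ (v i) ▸ hΦ.mul_mul_conjTranspose_same _


lemma Dmax_le_Dmax {α β : Type*} [Fintype α] [Fintype β] {ρ σ : Matrix α α ℂ}
    {ρ' σ' : Matrix β β ℂ}
    (h : ∀ l : ℝ, ((2 : ℝ) ^ l • σ - ρ).PosSemidef → ((2 : ℝ) ^ l • σ' - ρ').PosSemidef) :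
    Dmax ρ' σ' ≤ Dmax ρ σ :=
  sInf_le_sInf (Set.image_mono h)

lemma Dmax_smul {α : Type*} [Fintype α] {c : ℝ} (hc : 0 < c) (ρ σ : Matrix α α ℂ) :
    Dmax (c • ρ) (c • σ) = Dmax ρ σ := by
  have hscale : ∀ l : ℝ, (2 : ℝ) ^ l • (c • σ) - c • ρ = c • ((2 : ℝ) ^ l • σ - ρ) :=
    fun l => by rw [smul_sub, smul_comm]
  refine le_antisymm (Dmax_le_Dmax fun l h => ?_) (Dmax_le_Dmax fun l h => ?_)
  · rw [hscale]
    exact h.smul hc.le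
  · rw [hscale] at h
    simpa [smul_smul, hc.ne'] using h.smul (inv_nonneg.2 hc.le)

lemma Dmax_of_isEmpty {α : Type*} [Fintype α] [IsEmpty α] (ρ σ : Matrix α α ℂ) :
    Dmax ρ σ = ⊥ := by
  refine (EReal.eq_bot_iff_forall_lt _).2 fun y => ?_
  have hy : y - 1 ∈ {l : ℝ | ((2 : ℝ) ^ l • σ - ρ).PosSemidef} := by
    rw [Set.mem_ofPred_eq, Subsingleton.elim ((2 : ℝ) ^ (y - 1) • σ - ρ) 0]
    exact .zero
  exact (sInf_le (Set.mem_image_of_mem (fun l : ℝ => (l : EReal)) hy)).trans_lt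
    (EReal.coe_lt_coe_iff.2 (sub_one_lt y))

lemma omegaProj_posSemidef [Fintype n] [DecidableEq n] : (omegaProj n).PosSemidef := by
  convert posSemidef_vecMulVec_self_star fun p : n × n => if p.1 = p.2 then (1 : ℂ) else 0
  ext p q
  simp only [omegaProj, vecMulVec_apply, ite_and]
  split_ifs <;> simp_all

lemma trace_omegaProj [Fintype n] [DecidableEq n] :
    (omegaProj n).trace = Fintype.card n := by
  simp only [trace, diag, omegaProj, and_self]
  rw [Fintype.sum_prod_type]
  simp

lemma isDensity_inv_card_smul_omegaProj [Fintype n] [DecidableEq n] [Nonempty n] :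
    IsDensity ((Fintype.card n : ℝ)⁻¹ • omegaProj n) := by
  refine ⟨omegaProj_posSemidef.smul (by positivity), ?_⟩
  rw [trace_smul, trace_omegaProj]
  simp

lemma Dmax_matTensorMap_le_Dmax_choi {k : Type*} [Fintype k] [Fintype n] [DecidableEq n]
    [Fintype m] (E F : Matrix n n ℂ →ₗ[ℂ] Matrix m m ℂ) {φ : Matrix (k × n) (k × n) ℂ}
    (hφ : φ.PosSemidef) :
    Dmax (matTensorMap (⇑E) φ) (matTensorMap (⇑F) φ) ≤ Dmax (choi (⇑E)) (choi (⇑F)) :=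
  Dmax_le_Dmax fun l hl => by
    rw [← matTensorMap_smul_sub]
    exact matTensorMap_posSemidef_of_choi _ (by rwa [choi, matTensorMap_smul_sub]) hφ

theorem DmaxChan_eq_Dmax_choi_general {n m : Type*} [Fintype n] [DecidableEq n] [Fintype m]
    (E F : Matrix n n ℂ →ₗ[ℂ] Matrix m m ℂ) :
    DmaxChan E F = Dmax (choi (⇑E)) (choi (⇑F)) := by
  refine le_antisymm (iSup_le fun φ => Dmax_matTensorMap_le_Dmax_choi E F φ.2.1) ?_
  rcases isEmpty_or_nonempty n with _ | _
  · rw [Dmax_of_isEmpty]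
    exact bot_le
  · have hc : (0 : ℝ) < (Fintype.card n : ℝ)⁻¹ := by positivity
    rw [← Dmax_smul hc, choi, choi, ← matTensorMap_smul, ← matTensorMap_smul]
    exact le_iSup_of_le ⟨_, isDensity_inv_card_smul_omegaProj⟩ le_rfl

/-- **The stabilized channel max-relative entropy reduces to the Choi operators:**
`D_max(E‖F) = D_max(J^E ‖ J^F)` for `E` trace-preserving completely positive and
`F` completely positive. -/
theorem DmaxChan_eq_Dmax_choi {n m : Type*} [Fintype n] [DecidableEq n] [Fintype m]
    (E F : Matrix n n ℂ →ₗ[ℂ] Matrix m m ℂ)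
    (hE : IsCP E) (hETP : IsTP E) (hF : IsCP F) :
    DmaxChan E F = Dmax (choi (⇑E)) (choi (⇑F)) :=
  DmaxChan_eq_Dmax_choi_general E F

end QIT
end
end
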